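/- With N₀(E) = (b₁⋯b_m/(2π)^m)(ω_n/(2π)^n) Σ_{q≥0} μ_q (E − Λ_q)_+^{n/2} for m ≥ 1, n ≥ 1 (and the analogous formulas for m = 0 or n = 0), one has lim_{E→∞} E^{−d/2} N₀(E) = ω_d/(2π)^d where d = 2m + n; i.e., the semiclassical coefficient is independent of the magnetic field. -/

import Mathlib

open Filter Real

/-- `ω_k = π^{k/2}/Γ(k/2+1)`, the volume of the unit ball in `ℝ^k`. -/
noncomputable def unitBallVol (k : ℕ) : ℝ :=
  π ^ ((k : ℝ) / 2) / Real.Gamma ((k : ℝ) / 2 + 1)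

/-!
With `c_j = 2 b_j` and `f x = (max x 0) ^ (n / 2)`, the lattice sum
`S_m(E) = Σ_ℓ f (E - Σ_j c_j ℓ_j)` satisfies `S_{m+1}(E) = Σ_k S_m(E - c_0 k)`.
If `g` is monotone, vanishes on `(-∞, 0]` and `g E ~ C E ^ α`, then `Σ_k g (E - c k)` lies
within `g E` of `c⁻¹ ∫₀ᴱ g ~ C E ^ (α + 1) / (c (α + 1))`; by induction
`S_m(E) ~ Γ(n/2 + 1) / (Γ(n/2 + m + 1) Π_j c_j) E ^ (n/2 + m)`.
The prefactor `Π_j b_j` cancels against `Π_j c_j = 2 ^ m Π_j b_j`, and what remains is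
`ω_{2m+n} / (2π) ^ (2m+n)` because `ω_{2m+n} = ω_n π ^ m Γ(n/2 + 1) / Γ(n/2 + m + 1)`.
-/

open Set

section OneVariable

variable {g : ℝ → ℝ} {α C c : ℝ}

lemma nonneg_of_monotone_of_eq_zero (hg : Monotone g) (hg0 : ∀ x ≤ 0, g x = 0) (x : ℝ) :
    0 ≤ g x := by
  rcases le_total x 0 with hx | hx
  · exact (hg0 x hx).ge
  · exact (hg0 0 le_rfl).symm.le.trans (hg hx)

/-- Rescaling `t = E s` turns the average into `∫₀¹ g (E s) / E ^ α ds`, to which dominated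
convergence applies: the integrand tends to `C s ^ α` and is bounded by `g E / E ^ α`. -/
theorem tendsto_intervalIntegral_div_rpow (hg : Monotone g) (hg0 : ∀ x ≤ 0, g x = 0)
    (hα : -1 < α) (hlim : Tendsto (fun E => g E / E ^ α) atTop (nhds C)) :
    Tendsto (fun E => (∫ t in (0 : ℝ)..E, g t) / E ^ (α + 1)) atTop (nhds (C / (α + 1))) := by
  have hrescale : ∀ E > 0,
      (∫ t in (0 : ℝ)..E, g t) / E ^ (α + 1) = ∫ s in (0 : ℝ)..1, g (E * s) / E ^ α := by
    intro E hE
    rw [intervalIntegral.integral_div, intervalIntegral.integral_comp_mul_left _ hE.ne',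
      mul_zero, mul_one, smul_eq_mul, rpow_add_one hE.ne']
    field_simp
  have hlimit : ∫ s in (0 : ℝ)..1, C * s ^ α = C / (α + 1) := by
    rw [intervalIntegral.integral_const_mul, integral_rpow (Or.inl hα),
      zero_rpow (by linarith), one_rpow]
    ring
  rw [← hlimit]
  refine Tendsto.congr' (eventually_gt_atTop 0 |>.mono fun E hE => (hrescale E hE).symm) ?_
  refine intervalIntegral.tendsto_integral_filter_of_dominated_convergence (fun _ => C + 1)
    (Eventually.of_forall fun E => ((hg.measurable.comp (measurable_const_mul E)).div_const
      _).aestronglyMeasurable) ?_ intervalIntegrable_const ?_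
  · filter_upwards [eventually_gt_atTop 0, hlim.eventually (gt_mem_nhds (lt_add_one C))]
      with E hE hbound
    refine Eventually.of_forall fun s hs => ?_
    rw [uIoc_of_le zero_le_one] at hs
    have hEs : g (E * s) ≤ g E := hg (mul_le_of_le_one_right hE.le hs.2)
    rw [Real.norm_of_nonneg (div_nonneg (nonneg_of_monotone_of_eq_zero hg hg0 _)
      (rpow_nonneg hE.le α))]
    exact (div_le_div_of_nonneg_right hEs (rpow_nonneg hE.le α)).trans hbound.le
  · refine Eventually.of_forall fun s hs => ?_
    rw [uIoc_of_le zero_le_one] at hs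
    have hscale : Tendsto (fun E => E * s) atTop atTop := tendsto_id.atTop_mul_const hs.1
    refine ((hlim.comp hscale).mul_const (s ^ α)).congr' ?_
    filter_upwards [eventually_gt_atTop 0] with E hE
    have hsα : 0 < s ^ α := rpow_pos_of_pos hs.1 α
    rw [Function.comp_apply, mul_rpow hE.le hs.1.le]
    field_simp

lemma tsum_sub_mul_eq_sum_range (hg0 : ∀ x ≤ 0, g x = 0) (hc : 0 < c) {E : ℝ} {N : ℕ}
    (hN : E ≤ c * N) : ∑' k : ℕ, g (E - c * k) = ∑ k ∈ Finset.range N, g (E - c * k) := by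
  refine tsum_eq_sum fun k hk => hg0 _ ?_
  have : (N : ℝ) ≤ k := by exact_mod_cast not_lt.mp (Finset.mem_range.not.mp hk)
  nlinarith

lemma intervalIntegral_sub_mul (hg : Monotone g) (hg0 : ∀ x ≤ 0, g x = 0) (hc : 0 < c)
    {E N : ℝ} (hN : E ≤ c * N) :
    ∫ t in (0 : ℝ)..N, g (E - c * t) = c⁻¹ * ∫ t in (0 : ℝ)..E, g t := by
  have hvanish : ∫ t in E - c * N..0, g t = 0 := by
    rw [intervalIntegral.integral_congr (g := fun _ => 0), intervalIntegral.integral_zero]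
    intro t ht
    rw [uIcc_of_le (by linarith)] at ht
    exact hg0 t ht.2
  rw [intervalIntegral.integral_comp_sub_mul _ hc.ne', mul_zero, sub_zero, smul_eq_mul,
    ← intervalIntegral.integral_add_adjacent_intervals hg.intervalIntegrable
      hg.intervalIntegrable, hvanish, zero_add]

lemma tsum_sub_mul_mem_Icc (hg : Monotone g) (hg0 : ∀ x ≤ 0, g x = 0) (hc : 0 < c) (E : ℝ) :
    ∑' k : ℕ, g (E - c * k) ∈
      Icc (c⁻¹ * ∫ t in (0 : ℝ)..E, g t) (g E + c⁻¹ * ∫ t in (0 : ℝ)..E, g t) := by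
  set N := ⌈E / c⌉₊
  have hN : E ≤ c * N := (div_le_iff₀' hc).mp (Nat.le_ceil _)
  have hanti : AntitoneOn (fun t : ℝ => g (E - c * t)) (Icc 0 (0 + N)) :=
    fun x _ y _ hxy => hg (by nlinarith)
  have hlast : g (E - c * N) = 0 := hg0 _ (by linarith)
  have hshift := Finset.sum_range_succ' (fun k : ℕ => g (E - c * k)) N
  rw [Finset.sum_range_succ, hlast, add_zero] at hshift
  rw [tsum_sub_mul_eq_sum_range hg0 hc hN, ← intervalIntegral_sub_mul hg hg0 hc hN]
  have hlower := hanti.integral_le_sum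
  have hupper := hanti.sum_le_integral
  simp only [zero_add, Nat.cast_zero, mul_zero, sub_zero] at hlower hupper hshift
  push_cast at hupper hshift
  constructor <;> linarith

theorem tendsto_tsum_sub_mul_div_rpow (hg : Monotone g) (hg0 : ∀ x ≤ 0, g x = 0)
    (hα : -1 < α) (hc : 0 < c) (hlim : Tendsto (fun E => g E / E ^ α) atTop (nhds C)) :
    Tendsto (fun E => (∑' k : ℕ, g (E - c * k)) / E ^ (α + 1)) atTop
      (nhds (C / (c * (α + 1)))) := by
  have hmain : Tendsto (fun E => c⁻¹ * ((∫ t in (0 : ℝ)..E, g t) / E ^ (α + 1))) atTop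
      (nhds (C / (c * (α + 1)))) := by
    convert (tendsto_intervalIntegral_div_rpow hg hg0 hα hlim).const_mul c⁻¹ using 2
    field_simp
  have hfirst : Tendsto (fun E => g E / E ^ (α + 1)) atTop (nhds 0) := by
    have := hlim.mul tendsto_inv_atTop_zero
    rw [mul_zero] at this
    refine this.congr' ?_
    filter_upwards [eventually_gt_atTop 0] with E hE
    rw [rpow_add_one hE.ne', div_mul_eq_div_div, div_eq_mul_inv (_ / _)]
  have hupper := hfirst.add hmain
  rw [zero_add] at hupper
  refine tendsto_of_tendsto_of_tendsto_of_le_of_le' hmain hupper ?_ ?_ <;>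
    filter_upwards [eventually_gt_atTop 0] with E hE <;>
    have hbounds := tsum_sub_mul_mem_Icc hg hg0 hc E
  · rw [← mul_div_assoc]
    exact div_le_div_of_nonneg_right hbounds.1 (rpow_nonneg hE.le _)
  · rw [← mul_div_assoc, ← add_div]
    exact div_le_div_of_nonneg_right hbounds.2 (rpow_nonneg hE.le _)

end OneVariable

section LatticeSum

variable {f : ℝ → ℝ} {m : ℕ}

noncomputable def latticeSum (f : ℝ → ℝ) (c : Fin m → ℝ) (E : ℝ) : ℝ :=
  ∑' ℓ : Fin m → ℕ, f (E - ∑ j, c j * ℓ j)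

lemma sum_mul_natCast_nonneg {c : Fin m → ℝ} (hc : ∀ j, 0 < c j) (ℓ : Fin m → ℕ) :
    0 ≤ ∑ j, c j * ℓ j :=
  Finset.sum_nonneg fun j _ => mul_nonneg (hc j).le (Nat.cast_nonneg _)

lemma summable_latticeSum (hf0 : ∀ x ≤ 0, f x = 0) {c : Fin m → ℝ} (hc : ∀ j, 0 < c j)
    (E : ℝ) : Summable fun ℓ : Fin m → ℕ => f (E - ∑ j, c j * ℓ j) := by
  refine summable_of_hasFiniteSupport <|
    (Set.Finite.pi fun j => Set.finite_Iic ⌊E / c j⌋₊).subset fun ℓ hℓ j _ => ?_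
  have hpos : 0 < E - ∑ i, c i * ℓ i := lt_of_not_ge fun h => hℓ (hf0 _ h)
  have hj : c j * ℓ j ≤ ∑ i, c i * ℓ i :=
    Finset.single_le_sum (fun i _ => mul_nonneg (hc i).le (Nat.cast_nonneg _))
      (Finset.mem_univ j)
  exact Nat.le_floor ((le_div_iff₀' (hc j)).mpr (by linarith))

lemma latticeSum_of_nonpos (hf0 : ∀ x ≤ 0, f x = 0) {c : Fin m → ℝ} (hc : ∀ j, 0 < c j)
    {E : ℝ} (hE : E ≤ 0) : latticeSum f c E = 0 := by
  refine (tsum_congr fun ℓ => hf0 _ ?_).trans tsum_zero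
  linarith [sum_mul_natCast_nonneg hc ℓ]

lemma monotone_latticeSum (hf : Monotone f) (hf0 : ∀ x ≤ 0, f x = 0) {c : Fin m → ℝ}
    (hc : ∀ j, 0 < c j) : Monotone (latticeSum f c) := fun E E' hEE' =>
  Summable.tsum_le_tsum (fun ℓ => hf (by linarith))
    (summable_latticeSum hf0 hc E) (summable_latticeSum hf0 hc E')

lemma latticeSum_zero (c : Fin 0 → ℝ) : latticeSum f c = f := by
  ext E
  simp [latticeSum]

lemma latticeSum_succ (hf0 : ∀ x ≤ 0, f x = 0) {c : Fin (m + 1) → ℝ} (hc : ∀ j, 0 < c j)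
    (E : ℝ) : latticeSum f c E = ∑' k : ℕ, latticeSum f (Fin.tail c) (E - c 0 * k) := by
  set e := Fin.consEquiv fun _ : Fin (m + 1) => ℕ
  have hsplit : ∀ q : ℕ × (Fin m → ℕ), E - ∑ j, c j * (e q j : ℕ) =
      E - c 0 * q.1 - ∑ j, Fin.tail c j * q.2 j := by
    rintro ⟨k, ℓ⟩
    simp only [e, Fin.consEquiv, Equiv.coe_fn_mk, Fin.sum_univ_succ, Fin.cons_zero,
      Fin.cons_succ, Fin.tail]
    ring
  unfold latticeSum
  rw [← e.tsum_eq]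
  simp only [hsplit]
  refine Summable.tsum_prod' ?_ fun k => ?_
  · simpa only [Function.comp_def, hsplit] using
      e.summable_iff.mpr (summable_latticeSum hf0 hc E)
  · exact summable_latticeSum hf0 (c := Fin.tail c) (fun j => hc j.succ) (E - c 0 * k)

theorem tendsto_latticeSum_div_rpow {α C : ℝ} (hf : Monotone f) (hf0 : ∀ x ≤ 0, f x = 0)
    (hα : -1 < α) (hlim : Tendsto (fun E => f E / E ^ α) atTop (nhds C))
    (c : Fin m → ℝ) (hc : ∀ j, 0 < c j) :
    Tendsto (fun E => latticeSum f c E / E ^ (α + m)) atTop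
      (nhds (C * Gamma (α + 1) / (Gamma (α + m + 1) * ∏ j, c j))) := by
  induction m with
  | zero =>
    have hΓ : Gamma (α + 1) ≠ 0 := (Gamma_pos_of_pos (by linarith)).ne'
    simpa [latticeSum_zero, hΓ] using hlim
  | succ m ih =>
    have htail : ∀ j, 0 < Fin.tail c j := fun j => hc j.succ
    have hαm : -1 < α + m := by linarith [m.cast_nonneg (α := ℝ)]
    have hstep := tendsto_tsum_sub_mul_div_rpow (monotone_latticeSum hf hf0 htail)
      (fun E hE => latticeSum_of_nonpos hf0 htail hE) hαm (hc 0) (ih (Fin.tail c) htail)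
    have hΓ : Gamma (α + ↑(m + 1) + 1) = (α + m + 1) * Gamma (α + m + 1) := by
      rw [Nat.cast_succ, ← add_assoc, Gamma_add_one (by linarith)]
    have hprod : ∏ j, c j = c 0 * ∏ j, Fin.tail c j := Fin.prod_univ_succ c
    rw [hΓ, hprod]
    convert hstep using 2 with E
    · rw [latticeSum_succ hf0 hc, Nat.cast_succ, add_assoc]
    · have hΓ_pos := Gamma_pos_of_pos (show 0 < α + m + 1 by linarith)
      have hc0 := hc 0
      field_simp

end LatticeSum

section PositivePartPower

variable {p : ℝ}

lemma monotone_max_zero_rpow (hp : 0 ≤ p) : Monotone fun x : ℝ => max x 0 ^ p :=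
  fun _ _ hxy => rpow_le_rpow (le_max_right _ 0) (max_le_max_right 0 hxy) hp

lemma max_zero_rpow_of_nonpos (hp : p ≠ 0) {x : ℝ} (hx : x ≤ 0) : max x 0 ^ p = 0 := by
  rw [max_eq_right hx, zero_rpow hp]

lemma tendsto_max_zero_rpow_div_rpow (p : ℝ) :
    Tendsto (fun E : ℝ => max E 0 ^ p / E ^ p) atTop (nhds 1) :=
  tendsto_const_nhds.congr' <| (eventually_gt_atTop 0).mono fun E hE => by
    simp only [max_eq_left hE.le, div_self (rpow_pos_of_pos hE p).ne']

end PositivePartPower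

lemma unitBallVol_two_mul_add (m n : ℕ) :
    unitBallVol (2 * m + n) =
      unitBallVol n * π ^ m * Gamma ((n : ℝ) / 2 + 1) / Gamma ((n : ℝ) / 2 + m + 1) := by
  have hdim : ((2 * m + n : ℕ) : ℝ) / 2 = (n : ℝ) / 2 + m := by push_cast; ring
  have hΓ : Gamma ((n : ℝ) / 2 + 1) ≠ 0 := (Gamma_pos_of_pos (by positivity)).ne'
  rw [unitBallVol, unitBallVol, hdim, rpow_add pi_pos, rpow_natCast]
  field_simp

theorem stmt15_general (m n : ℕ) (hn : 1 ≤ n)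
    (b : Fin m → ℝ) (hb : ∀ j, 0 < b j) :
    Tendsto (fun E : ℝ =>
      ((∏ j, b j) / (2 * π) ^ m * (unitBallVol n / (2 * π) ^ n)
        * ∑' ℓ : Fin m → ℕ,
            (max (E - 2 * ∑ j, b j * (ℓ j : ℝ)) 0) ^ ((n : ℝ) / 2))
      / E ^ (((2 * m + n : ℕ) : ℝ) / 2)) atTop
      (nhds (unitBallVol (2 * m + n) / (2 * π) ^ (2 * m + n))) := by
  set p : ℝ := (n : ℝ) / 2 with hp_def
  have hp : 0 < p := by positivity
  have hlattice := (tendsto_latticeSum_div_rpow (monotone_max_zero_rpow hp.le)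
    (fun _ => max_zero_rpow_of_nonpos hp.ne') (by linarith) (tendsto_max_zero_rpow_div_rpow p)
    (fun j => 2 * b j) fun j => by linarith [hb j]).const_mul
      ((∏ j, b j) / (2 * π) ^ m * (unitBallVol n / (2 * π) ^ n))
  have hdim : ((2 * m + n : ℕ) : ℝ) / 2 = p + m := by push_cast; ring
  have hsum : ∀ E : ℝ, ∑' ℓ : Fin m → ℕ, max (E - 2 * ∑ j, b j * (ℓ j : ℝ)) 0 ^ p =
      latticeSum (fun x => max x 0 ^ p) (fun j => 2 * b j) E := fun E => by
    simp only [latticeSum, Finset.mul_sum, mul_assoc]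
  simp only [hdim, hsum, mul_div_assoc]
  convert hlattice using 2
  have hΓ := Gamma_pos_of_pos (show 0 < p + m + 1 by positivity)
  have hπ := pi_pos
  have hb_prod : ∏ j, b j ≠ 0 := Finset.prod_ne_zero_iff.mpr fun j _ => (hb j).ne'
  have hpow : (2 * π) ^ (2 * m + n) = (2 * π) ^ m * (2 * π) ^ m * (2 * π) ^ n := by ring
  rw [unitBallVol_two_mul_add, ← hp_def, Finset.prod_mul_distrib, Finset.prod_const,
    Finset.card_univ, Fintype.card_fin, hpow]
  field_simp
  ring

/-- With `N₀(E) = (b₁⋯b_m/(2π)^m)(ω_n/(2π)^n) Σ_{ℓ∈ℤ₊^m} (E − 2Σ_j b_j ℓ_j)_+^{n/2}`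
(for `m ≥ 1`, `n ≥ 1`), one has `lim_{E→∞} E^{−d/2} N₀(E) = ω_d/(2π)^d` with
`d = 2m + n`: the semiclassical coefficient is independent of the magnetic field. -/
theorem stmt15 (m n : ℕ) (hm : 1 ≤ m) (hn : 1 ≤ n)
    (b : Fin m → ℝ) (hb : ∀ j, 0 < b j)
    (hbmono : ∀ i j : Fin m, i ≤ j → b j ≤ b i) :
    Tendsto (fun E : ℝ =>
      ((∏ j, b j) / (2 * π) ^ m * (unitBallVol n / (2 * π) ^ n)
        * ∑' ℓ : Fin m → ℕ,
            (max (E - 2 * ∑ j, b j * (ℓ j : ℝ)) 0) ^ ((n : ℝ) / 2))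
      / E ^ (((2 * m + n : ℕ) : ℝ) / 2)) atTop
      (nhds (unitBallVol (2 * m + n) / (2 * π) ^ (2 * m + n))) :=
  stmt15_general m n hn b hb
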